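/- arXiv:0911.2047 — 3 statements merged into one kernel-verified Lean document; each statement's English description precedes it below -/
import Mathlib

section
/- Let S be a Temperley–Lieb relation on {1,…,2n} and K(S) its Kreweras complement. Then for every class C = {a₁ < a₂ < ⋯ < a_k} of K(S): all the aᵢ have the same parity, and {aᵢ + 1, a_{i+1}} ∈ S for each i = 1,…,k, where aᵢ + 1 is computed modulo 2n (so a_k + 1 means 1 when a_k = 2n) and a_{k+1} means a₁. -/
noncomputable section
open scoped Classical

/-- `p` encodes a Temperley–Lieb relation (a noncrossing partition into two-element blocks)
on `Fin N`, as a fixed-point-free involution whose blocks `{i, p i}` are noncrossing. -/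
def IsTL (N : ℕ) (p : Fin N → Fin N) : Prop :=
  (∀ i, p (p i) = i) ∧ (∀ i, p i ≠ i) ∧
  (∀ i j : Fin N, i < j → j < p i → p j < p i)

/-- the Kreweras complement of the Temperley–Lieb relation `p`, as an equivalence relation:
`i ~ j` iff the interval of points strictly after `min i j` and up to `max i j` is closed
under the pairing, i.e. is a union of blocks of `p`.  (This is the standard concrete
description of the coarsest partition whose interleaved union with `p` is noncrossing.) -/
def krew {N : ℕ} (p : Fin N → Fin N) (i j : Fin N) : Prop :=
  ∀ k : Fin N, min i.val j.val < k.val → k.val ≤ max i.val j.val →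
    (min i.val j.val < (p k).val ∧ (p k).val ≤ max i.val j.val)

lemma krew_refl {N : ℕ} (p : Fin N → Fin N) (i : Fin N) : krew p i i := by
  intro k h1 h2; simp only [Nat.min_self, Nat.max_self] at h1 h2; omega

/-- the class of `i` in the Kreweras complement of `p` -/
def kclass {N : ℕ} (p : Fin N → Fin N) (i : Fin N) : Finset (Fin N) :=
  Finset.univ.filter fun j => krew p i j

lemma mem_kclass_self {N : ℕ} (p : Fin N → Fin N) (i : Fin N) : i ∈ kclass p i := by
  simp [kclass, krew_refl]

/-- cyclic successor on `Fin N` -/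
def cycSucc {N : ℕ} (a : Fin N) : Fin N :=
  if h : a.val + 1 < N then ⟨a.val + 1, h⟩ else ⟨0, by have := a.isLt; omega⟩

/-- the element following `a` in its Kreweras complement class, cyclically: the smallest
element of the class that is `> a` if there is one, and the smallest element of the class
otherwise. -/
def classNext {N : ℕ} (p : Fin N → Fin N) (a : Fin N) : Fin N :=
  if h : ((kclass p a).filter fun b => a < b).Nonempty then
    ((kclass p a).filter fun b => a < b).min' h
  else (kclass p a).min' ⟨a, mem_kclass_self p a⟩

/- ---------- auxiliary lemmas ---------- -/

lemma even_card_invol {α : Type*} [DecidableEq α] (s : Finset α) :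
    ∀ (f : α → α), (∀ x ∈ s, f x ∈ s) → (∀ x ∈ s, f (f x) = x) → (∀ x ∈ s, f x ≠ x) →
    Even s.card := by
  induction s using Finset.strongInduction with
  | _ s ih =>
    intro f h1 h2 h3
    rcases s.eq_empty_or_nonempty with rfl | ⟨x, hx⟩
    · simp
    · have hfx : f x ∈ s := h1 x hx
      have hne : f x ≠ x := h3 x hx
      set t := (s.erase x).erase (f x) with ht
      have hmemt : ∀ y, y ∈ t ↔ y ≠ f x ∧ y ≠ x ∧ y ∈ s := by
        intro y; simp [ht, Finset.mem_erase, and_assoc]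
      have hsub : t ⊂ s := by
        refine Finset.ssubset_of_subset_of_ssubset ?_ (Finset.erase_ssubset hx)
        exact Finset.erase_subset _ _
      have h1' : ∀ y ∈ t, f y ∈ t := by
        intro y hy
        rw [hmemt] at hy ⊢
        obtain ⟨hy1, hy2, hy3⟩ := hy
        refine ⟨?_, ?_, h1 y hy3⟩
        · intro he
          have : f (f y) = f (f x) := by rw [he]
          rw [h2 y hy3, h2 x hx] at this
          exact hy2 this
        · intro he
          have : f (f y) = f x := by rw [he]
          rw [h2 y hy3] at this
          exact hy1 this
      have h2' : ∀ y ∈ t, f (f y) = y := fun y hy => h2 y ((hmemt y).mp hy).2.2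
      have h3' : ∀ y ∈ t, f y ≠ y := fun y hy => h3 y ((hmemt y).mp hy).2.2
      obtain ⟨r, hr⟩ := ih t hsub f h1' h2' h3'
      have hcx : (s.erase x).card = s.card - 1 := Finset.card_erase_of_mem hx
      have hfx' : f x ∈ s.erase x := Finset.mem_erase.mpr ⟨hne, hfx⟩
      have hct : t.card = (s.erase x).card - 1 := Finset.card_erase_of_mem hfx'
      have hpos : 0 < s.card := Finset.card_pos.mpr ⟨x, hx⟩
      have hpos' : 0 < (s.erase x).card := Finset.card_pos.mpr ⟨f x, hfx'⟩
      exact ⟨r + 1, by omega⟩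

section
variable {N : ℕ} {p : Fin N → Fin N}

lemma krew_symm {i j : Fin N} (h : krew p i j) : krew p j i := by
  intro k h1 h2
  obtain ⟨c1, c2⟩ := h k (by omega) (by omega)
  exact ⟨by omega, by omega⟩

lemma ncv (hp : IsTL N p) {i j : Fin N} (h1 : i.val < j.val) (h2 : j.val < (p i).val) :
    (p j).val < (p i).val :=
  Fin.lt_def.mp (hp.2.2 i j (Fin.lt_def.mpr h1) (Fin.lt_def.mpr h2))

lemma cycSucc_val (a : Fin N) :
    (a.val + 1 < N ∧ (cycSucc a).val = a.val + 1) ∨ (a.val + 1 = N ∧ (cycSucc a).val = 0) := by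
  have := a.isLt
  by_cases h : a.val + 1 < N
  · left; exact ⟨h, by simp [cycSucc, h]⟩
  · right; exact ⟨by omega, by simp [cycSucc, h]⟩

lemma krew_parity (hp : IsTL N p) (i j : Fin N) (hle : i.val ≤ j.val) (h : krew p i j) :
    Even (j.val - i.val) := by
  have hcard : (Finset.Ioc i j).card = j.val - i.val := Fin.card_Ioc i j
  rw [← hcard]
  apply even_card_invol _ p
  · intro x hx
    rw [Finset.mem_Ioc] at hx ⊢
    have hx1 : i.val < x.val := Fin.lt_def.mp hx.1
    have hx2 : x.val ≤ j.val := Fin.le_def.mp hx.2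
    obtain ⟨c1, c2⟩ := h x (by omega) (by omega)
    exact ⟨Fin.lt_def.mpr (by omega), Fin.le_def.mpr (by omega)⟩
  · intro x _; exact hp.1 x
  · intro x _; exact hp.2.1 x

/-- the block of `a+1` (cyclically) belongs to the Kreweras class of `a` -/
lemma krew_cycSucc (hp : IsTL N p) (a : Fin N) : krew p a (p (cycSucc a)) := by
  have hinv : ∀ i, p (p i) = i := hp.1
  set s := cycSucc a with hsdef
  set b := p s with hbdef
  have hpb : p b = s := hinv s
  have hbs : b.val ≠ s.val := fun h => hp.2.1 s (Fin.ext h)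
  rcases cycSucc_val a with ⟨h1, hs⟩ | ⟨h1, hs⟩
  · -- s.val = a.val + 1
    intro k hk1 hk2
    rcases lt_trichotomy a.val b.val with hab | hab | hab
    · -- a < b
      have hmin : min a.val b.val = a.val := by omega
      have hmax : max a.val b.val = b.val := by omega
      have hk1' : a.val < k.val := by omega
      have hk2' : k.val ≤ b.val := by omega
      rw [hmin, hmax]
      by_cases hks : k.val = s.val
      · have : k = s := Fin.ext hks
        subst this
        exact ⟨hab, le_rfl⟩
      · by_cases hkb : k.val = b.val
        · have : k = b := Fin.ext hkb
          subst this
          rw [hpb]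
          constructor <;> omega
        · have hk3 : s.val < k.val := by omega
          have hk4 : k.val < b.val := by omega
          have h5 : (p k).val < (p s).val := ncv hp hk3 (by rw [← hbdef]; omega)
          rw [← hbdef] at h5
          refine ⟨?_, le_of_lt h5⟩
          by_contra h6
          push_neg at h6
          have h7 : (p k).val < s.val := by omega
          have h8 : s.val < (p (p k)).val := by rw [hinv k]; omega
          have h9 := ncv hp h7 h8
          rw [hinv k, ← hbdef] at h9
          omega
    · -- b = a : empty interval
      omega
    · -- b < a
      have hmin : min a.val b.val = b.val := by omega
      have hmax : max a.val b.val = a.val := by omega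
      have hk1' : b.val < k.val := by omega
      have hk2' : k.val ≤ a.val := by omega
      rw [hmin, hmax]
      have hks : k.val ≠ s.val := by omega
      have hup : (p k).val ≤ a.val := by
        by_contra h
        push_neg at h
        have h5 := ncv hp hk1' (show k.val < (p b).val by rw [hpb]; omega)
        rw [hpb] at h5
        omega
      refine ⟨?_, hup⟩
      by_contra h
      push_neg at h
      have hne2 : (p k).val ≠ b.val := by
        intro he
        have : p k = b := Fin.ext he
        have : k = s := by rw [← hinv k, this, hpb]
        exact hks (by rw [this])
      have h5 := ncv hp (show (p k).val < b.val by omega)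
        (show b.val < (p (p k)).val by rw [hinv k]; omega)
      rw [hinv k, hpb] at h5
      omega
  · -- s.val = 0, a.val = N - 1
    intro k hk1 hk2
    have hbb : b.val ≤ a.val := by have := b.isLt; omega
    rcases eq_or_lt_of_le hbb with hab | hab
    · -- b = a : empty interval
      omega
    · have hmin : min a.val b.val = b.val := by omega
      have hmax : max a.val b.val = a.val := by omega
      have hk1' : b.val < k.val := by omega
      rw [hmin, hmax]
      have hup : (p k).val ≤ a.val := by have := (p k).isLt; omega
      refine ⟨?_, hup⟩
      by_contra h
      push_neg at h
      have hne2 : (p k).val ≠ b.val := by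
        intro he
        have : p k = b := Fin.ext he
        have : k = s := by rw [← hinv k, this, hpb]
        have : k.val = 0 := by rw [this, hs]
        omega
      have hne0 : (p k).val ≠ 0 := by
        intro he
        have : p k = s := Fin.ext (by rw [he, hs])
        have : k = b := by rw [← hinv k, this, ← hbdef]
        have : k.val = b.val := by rw [this]
        omega
      have h5 := ncv hp (show s.val < (p k).val by omega)
        (show (p k).val < (p s).val by rw [← hbdef]; omega)
      rw [hinv k, ← hbdef] at h5
      omega

lemma krew_upper (hp : IsTL N p) (a c : Fin N) (h : krew p a c) (hac : a.val < c.val) :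
    a.val < (p (cycSucc a)).val ∧ (p (cycSucc a)).val ≤ c.val := by
  have hs : (cycSucc a).val = a.val + 1 := by
    rcases cycSucc_val a with ⟨_, h2⟩ | ⟨h1, _⟩
    · exact h2
    · have := c.isLt; omega
  obtain ⟨c1, c2⟩ := h (cycSucc a) (by omega) (by omega)
  constructor <;> omega

lemma krew_lower (hp : IsTL N p) (a c : Fin N) (hba : (p (cycSucc a)).val ≤ a.val)
    (h : krew p a c) : (p (cycSucc a)).val ≤ c.val := by
  by_contra hcb
  push_neg at hcb
  obtain ⟨c1, c2⟩ := h (p (cycSucc a)) (by omega) (by omega)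
  rw [hp.1 (cycSucc a)] at c1 c2
  rcases cycSucc_val a with ⟨_, h2⟩ | ⟨_, h2⟩ <;> omega

end

/-- Let `S` be a Temperley–Lieb relation on `{1,…,2n}` (encoded 0-based
on `Fin (2n)` by the involution `p`) and `K(S)` its Kreweras complement.  Then all the
elements of any class of `K(S)` have the same parity, and for each element `a` of a class,
`{a+1, a⁺} ∈ S`, where `a+1` is computed cyclically modulo `2n` and `a⁺` is the cyclically
next element of the class of `a`. -/
theorem kreweras_classes_of_TL
    (n : ℕ) (p : Fin (2 * n) → Fin (2 * n)) (hp : IsTL (2 * n) p) :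
    (∀ i j : Fin (2 * n), krew p i j → i.val % 2 = j.val % 2) ∧
    (∀ a : Fin (2 * n), p (cycSucc a) = classNext p a) := by
  constructor
  · intro i j hij
    rcases le_total i.val j.val with hle | hle
    · obtain ⟨r, hr⟩ := krew_parity hp i j hle hij
      omega
    · obtain ⟨r, hr⟩ := krew_parity hp j i hle (krew_symm hij)
      omega
  · intro a
    have hL1 := krew_cycSucc hp a
    by_cases hb : a.val < (p (cycSucc a)).val
    · have hmem : p (cycSucc a) ∈ (kclass p a).filter fun b => a < b := by
        simp only [kclass, Finset.mem_filter, Finset.mem_univ, true_and]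
        exact ⟨hL1, Fin.lt_def.mpr hb⟩
      have hne : ((kclass p a).filter fun b => a < b).Nonempty := ⟨_, hmem⟩
      rw [classNext, dif_pos hne]
      apply le_antisymm
      · apply Finset.le_min'
        intro y hy
        simp only [kclass, Finset.mem_filter, Finset.mem_univ, true_and] at hy
        exact Fin.le_def.mpr (krew_upper hp a y hy.1 (Fin.lt_def.mp hy.2)).2
      · exact Finset.min'_le _ _ hmem
    · push_neg at hb
      have hempty : ¬ ((kclass p a).filter fun b => a < b).Nonempty := by
        rintro ⟨c, hc⟩
        simp only [kclass, Finset.mem_filter, Finset.mem_univ, true_and] at hc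
        have := (krew_upper hp a c hc.1 (Fin.lt_def.mp hc.2)).1
        omega
      rw [classNext, dif_neg hempty]
      apply le_antisymm
      · apply Finset.le_min'
        intro y hy
        simp only [kclass, Finset.mem_filter, Finset.mem_univ, true_and] at hy
        exact Fin.le_def.mpr (krew_lower hp a y hb hy)
      · refine Finset.min'_le _ _ ?_
        simp only [kclass, Finset.mem_filter, Finset.mem_univ, true_and]
        exact hL1
end
end

section
/- Let S be a Temperley–Lieb relation on {1,…,2n}; for i ∈ {1,…,2n} set ε_S(i) = +1 if i is the smaller element of its S-block and ε_S(i) = −1 otherwise. Then for every class C = {a₁ < ⋯ < a_k} of the Kreweras complement K(S): if 2n ∉ C then ε_S(a₁) = 1 and ε_S(aᵢ) = −1 for all i ≥ 2, so that ∑_{c∈C} ε_S(c) = 2 − |C|; and if 2n ∈ C then ε_S(aᵢ) = −1 for all i, so that ∑_{c∈C} ε_S(c) = −|C|. -/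
noncomputable section
open scoped Classical

/-- the sign `ε_S(i)`: `+1` if `i` is the smaller element of its block, `-1` otherwise -/
def epsTL {N : ℕ} (p : Fin N → Fin N) (i : Fin N) : ℤ := if i < p i then 1 else -1

/-!
The interval strictly after the least element `m` of a Kreweras class and up to any other element
`b` of it is a union of blocks. Hence `b`'s partner lies in that interval, below `b`, so `ε(b) = -1`,
and `m`'s partner cannot lie in it. If `m`'s partner were to the left of `m`, then noncrossing makes
`[p m, m]` a union of blocks, which puts `p m - 1` into the class of `m`, or, when `p m` is the first
point, the last point `2n`. The same argument with `2n` in place of `b` shows that all elements of the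
class of `2n`, its least element included, have `ε = -1`.
-/

variable {N : ℕ} {p : Fin N → Fin N}

lemma krew_comm {i j : Fin N} : krew p i j ↔ krew p j i := by
  simp only [krew, min_comm, max_comm]

lemma krew_trans (hp : Function.Involutive p) {i j k : Fin N}
    (hij : krew p i j) (hjk : krew p j k) : krew p i k := by
  intro x hx₁ hx₂
  by_contra hout
  by_cases hx : min i.val j.val < x.val ∧ x.val ≤ max i.val j.val
  · have hpx := hij x hx.1 hx.2
    have := hjk (p x) (by omega) (by omega)
    rw [hp x] at this
    omega
  · have hpx := hjk x (by omega) (by omega)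
    have := hij (p x) (by omega) (by omega)
    rw [hp x] at this
    omega

lemma krew_of_mem_kclass (hp : Function.Involutive p) {a b c : Fin N}
    (hb : b ∈ kclass p a) (hc : c ∈ kclass p a) : krew p b c := by
  simp only [kclass, Finset.mem_filter, Finset.mem_univ, true_and] at hb hc
  exact krew_trans hp (krew_comm.mp hb) hc

lemma epsTL_eq_neg_one_of_krew_of_lt (hne : ∀ i, p i ≠ i) {i j : Fin N}
    (h : krew p i j) (hij : i < j) : epsTL p j = -1 := by
  have hj := h j (by omega) (by omega)
  have := hne j
  simp only [epsTL, ite_eq_right_iff]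
  omega

lemma not_lt_apply_le_of_krew (hp : Function.Involutive p) {i j : Fin N}
    (h : krew p i j) (hij : i < j) : ¬ (i < p i ∧ p i ≤ j) := by
  rintro ⟨h₁, h₂⟩
  have := h (p i) (by omega) (by omega)
  rw [hp i] at this
  omega

lemma epsTL_eq_neg_one_of_krew_last (hp : IsTL N p) {m l : Fin N}
    (h : krew p m l) (hl : l.val = N - 1) : epsTL p m = -1 := by
  have hne := hp.2.1 m
  have hml : ¬ (m < p m ∧ p m ≤ l) := by
    rcases lt_or_eq_of_le (show m ≤ l by omega) with hlt | rfl
    · exact not_lt_apply_le_of_krew hp.1 h hlt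
    · omega
  simp only [epsTL, ite_eq_right_iff]
  omega

lemma IsTL.apply_mem_Icc (hp : IsTL N p) {m k : Fin N} (hm : p m < m)
    (hk₁ : p m ≤ k) (hk₂ : k ≤ m) : p m ≤ p k ∧ p k ≤ m := by
  obtain ⟨hinv, hne, hnc⟩ := hp
  rcases eq_or_lt_of_le hk₁ with rfl | hk₁
  · rw [hinv]; omega
  rcases eq_or_lt_of_le hk₂ with rfl | hk₂
  · omega
  have hkm : p k < m := by simpa only [hinv] using hnc (p m) k hk₁ (by rwa [hinv])
  have hpk : p k ≠ p m := fun e => hk₂.ne (by simpa only [hinv] using congrArg p e)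
  have hlo : p m ≤ p k := by
    by_contra! hlt
    have := hnc (p k) (p m) hlt (by rwa [hinv])
    rw [hinv, hinv] at this
    omega
  omega

lemma IsTL.krew_pred_apply (hp : IsTL N p) {m : Fin N} (hm : p m < m) (h0 : 0 < (p m).val) :
    krew p m ⟨(p m).val - 1, by omega⟩ := by
  intro k hk₁ hk₂
  simp only at hk₁ hk₂ ⊢
  have := hp.apply_mem_Icc hm (k := k) (by omega) (by omega)
  omega

lemma IsTL.krew_last_of_apply_eq_zero (hp : IsTL N p) {m l : Fin N} (hm : (p m).val = 0)
    (hl : l.val = N - 1) : krew p m l := by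
  intro k hk₁ hk₂
  refine ⟨?_, by omega⟩
  by_contra! hpk
  have hmpos : p m < m := by have := hp.2.1 m; omega
  have := hp.apply_mem_Icc hmpos (k := p k) (by omega) (by omega)
  rw [hp.1 k] at this
  omega

lemma IsTL.epsTL_min'_kclass (hp : IsTL N p) (a l : Fin N) (hl : l.val = N - 1)
    (hla : l ∉ kclass p a) : epsTL p ((kclass p a).min' ⟨a, mem_kclass_self p a⟩) = 1 := by
  set m := (kclass p a).min' ⟨a, mem_kclass_self p a⟩
  have hm : m ∈ kclass p a := Finset.min'_mem _ _
  have hclass {b : Fin N} (h : krew p m b) : b ∈ kclass p a := by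
    simp only [kclass, Finset.mem_filter, Finset.mem_univ, true_and] at hm ⊢
    exact krew_trans hp.1 hm h
  simp only [epsTL, ite_eq_left_iff]
  intro hpm
  have hpm : p m < m := by have := hp.2.1 m; omega
  rcases Nat.eq_zero_or_pos (p m).val with h0 | h0
  · exact absurd (hclass (hp.krew_last_of_apply_eq_zero h0 hl)) hla
  · have := Finset.min'_le _ _ (hclass (hp.krew_pred_apply hpm h0))
    simp only [Fin.le_def] at this
    omega

lemma Finset.sum_eq_two_sub_card {α : Type*} {s : Finset α} {f : α → ℤ} {m : α} (hm : m ∈ s)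
    (hfm : f m = 1) (hf : ∀ b ∈ s, b ≠ m → f b = -1) : ∑ b ∈ s, f b = 2 - (s.card : ℤ) := by
  rw [← Finset.add_sum_erase s f hm, hfm,
    Finset.sum_congr rfl fun b hb => hf b (Finset.mem_of_mem_erase hb) (Finset.ne_of_mem_erase hb),
    Finset.sum_const, Finset.card_erase_of_mem hm, nsmul_eq_mul,
    Nat.cast_sub (Finset.card_pos.mpr ⟨m, hm⟩)]
  push_cast
  ring

/-- Let `S` be a Temperley–Lieb relation on `{1,…,2n}` (encoded 0-based
on `Fin (2n)` by the involution `p`, so the 1-based point `2n` is `⟨2n-1,_⟩`).  For every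
class `C` of the Kreweras complement `K(S)`: if `2n ∉ C` then `ε_S` is `+1` on the least
element of `C` and `-1` on all the others, so `∑_{c∈C} ε_S(c) = 2 - |C|`; and if `2n ∈ C`
then `ε_S = -1` on all of `C`, so `∑_{c∈C} ε_S(c) = -|C|`. -/
theorem kreweras_eps_sum
    (n : ℕ) (p : Fin (2 * n) → Fin (2 * n)) (hp : IsTL (2 * n) p) (a : Fin (2 * n)) :
    ((⟨2 * n - 1, by have := a.isLt; omega⟩  : Fin (2 * n)) ∉ kclass p a →
      (epsTL p ((kclass p a).min' ⟨a, mem_kclass_self p a⟩) = 1 ∧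
       (∀ b ∈ kclass p a, b ≠ (kclass p a).min' ⟨a, mem_kclass_self p a⟩ → epsTL p b = -1) ∧
       ∑ c ∈ kclass p a, epsTL p c = 2 - ((kclass p a).card : ℤ))) ∧
    ((⟨2 * n - 1, by have := a.isLt; omega⟩  : Fin (2 * n)) ∈ kclass p a →
      ((∀ b ∈ kclass p a, epsTL p b = -1) ∧
       ∑ c ∈ kclass p a, epsTL p c = -((kclass p a).card : ℤ))) := by
  set l : Fin (2 * n) := ⟨2 * n - 1, by have := a.isLt; omega⟩
  have hm := Finset.min'_mem (kclass p a) ⟨a, mem_kclass_self p a⟩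
  have hrest : ∀ b ∈ kclass p a, b ≠ (kclass p a).min' ⟨a, mem_kclass_self p a⟩ →
      epsTL p b = -1 := fun b hb hbm =>
    epsTL_eq_neg_one_of_krew_of_lt hp.2.1 (krew_of_mem_kclass hp.1 hm hb)
      (lt_of_le_of_ne (Finset.min'_le _ _ hb) (Ne.symm hbm))
  refine ⟨fun hla => ?_, fun hla => ?_⟩
  · have hmin := hp.epsTL_min'_kclass a l rfl hla
    exact ⟨hmin, hrest, Finset.sum_eq_two_sub_card hm hmin hrest⟩
  · have hall : ∀ b ∈ kclass p a, epsTL p b = -1 := fun b hb =>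
      epsTL_eq_neg_one_of_krew_last hp (krew_of_mem_kclass hp.1 hb hla) rfl
    refine ⟨hall, ?_⟩
    rw [Finset.sum_congr rfl hall, Finset.sum_const, nsmul_eq_mul, mul_neg_one]
end
end

section
/- Let B ⊆ A be a unital inclusion of unital complex algebras and X a B-B-subbimodule of A. Given two families of B-B-bimodule maps {φ_n : X^{⊗_B n} → B}_{n≥1} and {κ_n : X^{⊗_B n} → B}_{n≥1}, with multiplicative extensions {φ_π} and {κ_π} (π ∈ NC(n)), the following conditions are equivalent: (1) φ_n = ∑_{π ∈ NC(n)} κ_π for each n; (2) κ_n = ∑_{π ∈ NC(n)} μ(π, 1_n) φ_π for each n; (3) φ_τ = ∑_{π ∈ NC(n), π ≤ τ} κ_π for each n and each τ ∈ NC(n); (4) κ_τ = ∑_{π ∈ NC(n), π ≤ τ} μ(π, τ) φ_π for each n and each τ ∈ NC(n). -/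
noncomputable section
open scoped Classical

/-- `r` encodes a noncrossing partition of `Fin n`, as a Boolean-valued equivalence
relation whose blocks are noncrossing. -/
def IsNCPart (n : ℕ) (r : Fin n → Fin n → Bool) : Prop :=
  (∀ i, r i i) ∧ (∀ i j, r i j → r j i) ∧ (∀ i j k, r i j → r j k → r i k) ∧
  (∀ i k j l : Fin n, i < k → k < j → j < l → r i j → r k l → r i k)

/-- refinement order on partitions: `r ≤ s` iff `r` refines `s` -/
def relLe {n : ℕ} (r s : Fin n → Fin n → Bool) : Prop := ∀ i j, r i j → s i j

/-- the maximal partition `1ₙ`, with a single block -/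
def relTop (n : ℕ) : Fin n → Fin n → Bool := fun _ _ => true

/-- the 0-based interval `{k, …, l-1}` (the 1-based interval `[k+1, l]` of the paper)
is a block of `r` -/
def IsIntervalBlock {n : ℕ} (r : Fin n → Fin n → Bool) (k l : ℕ) : Prop :=
  k < l ∧ l ≤ n ∧
    ∀ i j : Fin n, k ≤ i.val → i.val < l → (r i j ↔ (k ≤ j.val ∧ j.val < l))

/-- the order embedding of `Fin (n - (l - k))` into `Fin n` skipping the interval
`{k, …, l-1}` -/
def skipEmb {n : ℕ} (k l : ℕ) (j : Fin (n - (l - k))) : Fin n :=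
  if h : j.val < k then ⟨j.val, by have := j.isLt; omega⟩
  else ⟨j.val + (l - k), by have := j.isLt; omega⟩

/-- the partition induced by `r` on the complement of the interval `{k, …, l-1}` -/
def relRestr {n : ℕ} (r : Fin n → Fin n → Bool) (k l : ℕ) :
    Fin (n - (l - k)) → Fin (n - (l - k)) → Bool :=
  fun i j => r (skipEmb k l i) (skipEmb k l j)

/-- splicing a tuple: delete the entries in positions `{k, …, l-1}` and multiply the
entry in position `k-1` on the right by `b` -/
def splice {A : Type} [Ring A] {n : ℕ} (x : Fin n → A) (k l : ℕ) (b : A) :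
    Fin (n - (l - k)) → A := fun j =>
  if j.val + 1 < k then x ⟨j.val, by have := j.isLt; omega⟩
  else if j.val + 1 = k then x ⟨j.val, by have := j.isLt; omega⟩ * b
  else x ⟨j.val + (l - k), by have := j.isLt; omega⟩

section
variable {A : Type} [Ring A] [Algebra ℂ A] (B : Subalgebra ℂ A)

/-- `f` is an (additive, `ℂ`-homogeneous, `B`-balanced) `B`-`B`-bimodule map in the sense
relevant for operator-valued cumulants -/
def IsBimodMap {n : ℕ} (f : (Fin n → A) → A) : Prop :=
  (∀ (x : Fin n → A) (i : Fin n) (a b : A),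
    f (Function.update x i (a + b)) = f (Function.update x i a) + f (Function.update x i b)) ∧
  (∀ (x : Fin n → A) (i : Fin n) (c : ℂ) (a : A),
    f (Function.update x i (c • a)) = c • f (Function.update x i a)) ∧
  (∀ (hn : 0 < n) (x : Fin n → A) (b : A), b ∈ B →
    f (Function.update x ⟨0, hn⟩ (b * x ⟨0, hn⟩)) = b * f x) ∧
  (∀ (hn : 0 < n) (x : Fin n → A) (b : A), b ∈ B →
    f (Function.update x ⟨n - 1, by omega⟩ (x ⟨n - 1, by omega⟩ * b)) = f x * b) ∧
  (∀ (x : Fin n → A) (i : Fin n) (hi : i.val + 1 < n) (b : A), b ∈ B →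
    f (Function.update x i (x i * b)) =
      f (Function.update x ⟨i.val + 1, hi⟩ (b * x ⟨i.val + 1, hi⟩)))

/-- `Phi` is the multiplicative extension of the family `phi` over noncrossing
partitions: it agrees with `phi` on the maximal partitions `1ₙ` and satisfies the
defining recursion for every decomposition `π = ρ ∪ 1_{[k+1,l]}` by an interval block. -/
def IsMultExt (phi : ∀ n : ℕ, (Fin n → A) → A)
    (Phi : ∀ n : ℕ, (Fin n → Fin n → Bool) → (Fin n → A) → A) : Prop :=
  (∀ (n : ℕ) (x : Fin n → A), Phi n (relTop n) x = phi n x) ∧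
  (∀ (n : ℕ) (r : Fin n → Fin n → Bool), IsNCPart n r →
    ∀ (k l : ℕ), 1 ≤ k → (hint : IsIntervalBlock r k l) →
    ∀ x : Fin n → A,
      Phi n r x = Phi (n - (l - k)) (relRestr r k l)
        (splice x k l (phi (l - k)
          (fun j => x ⟨k + j.val, by have := j.isLt; have := hint.2.1; omega⟩))))

end

/-!
Everything reduces to showing that the moment-cumulant formula (1) implies its multiplicative
version (3). If `τ = ρ ∪ 1_V` for an interval block `V = {k+1, …, l}` with `k ≥ 1`, then
`Φ_τ(x) = Φ_ρ(…, x^k φ_{|V|}(x_V), …)`; expanding `φ_{|V|}` by (1), using additivity of `Φ_ρ` in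
that slot and expanding `Φ_ρ` by induction gives a double sum over `σ ∈ NC(V)` and `π ≤ ρ`. The
partitions `π ∪ σ` run exactly once through `{π' ≤ τ}`, and `K_{π ∪ σ}(x) = K_π(…, x^k K_σ(x_V), …)`
because `K` is multiplicative over any union of blocks forming an interval.

Then (3) ⇔ (4) is Möbius inversion on each interval `[0_n, τ]`, and (1), (2) are (3), (4) at
`τ = 1_n`. For (2) ⇒ (1) induct on `n`: (1) below `n` gives (3), hence (4), for all `τ ≠ 1_n`; with
(2) this is (4) on all of `NC(n)`, and inverting it at `1_n` gives (1).
-/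

open Finset

section MoebiusInversion
variable {α M : Type*} [Fintype α] [AddCommGroup M]

lemma sum_ite_smul_eq (c : α → ℤ) (p : α → Prop) [DecidablePred p] (g : M) :
    (∑ r, if p r then c r • g else 0) = (∑ r, if p r then c r else 0) • g := by
  rw [Finset.sum_smul]
  simp only [ite_smul, zero_smul]

variable [Preorder α] {S : α → Prop}

lemma sum_below_sum_below_comm (f : α → α → M) (t : α) :
    (∑ r, if S r ∧ r ≤ t then ∑ s, (if S s ∧ s ≤ r then f r s else 0) else 0) =
      ∑ s, if S s ∧ s ≤ t then ∑ r, (if S r ∧ s ≤ r ∧ r ≤ t then f r s else 0) else 0 := by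
  simp only [← Finset.sum_filter]
  refine Finset.sum_comm' fun r s => ?_
  simp only [Finset.mem_filter, Finset.mem_univ, true_and]
  exact ⟨fun ⟨⟨hr, hrt⟩, hs, hsr⟩ => ⟨⟨hr, hsr, hrt⟩, hs, hsr.trans hrt⟩,
    fun ⟨⟨hr, hsr, hrt⟩, hs, _⟩ => ⟨⟨hr, hrt⟩, hs, hsr⟩⟩

variable [DecidableEq α]

lemma sum_below_delta {t : α} (ht : S t) (G : α → M) :
    (∑ s, if S s ∧ s ≤ t then ((if s = t then 1 else 0 : ℤ) • G s) else 0) = G t := by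
  rw [Fintype.sum_eq_single t fun s hs => by simp [hs]]
  simp [ht]

theorem eq_sum_mu_smul_of_eq_sum_below (μ : α → α → ℤ)
    (hμ : ∀ r t, S r → S t → r ≤ t →
      (∑ s, if S s ∧ r ≤ s ∧ s ≤ t then μ s t else 0) = if r = t then 1 else 0)
    (F G : α → M) {t : α} (ht : S t)
    (h : ∀ r, S r → r ≤ t → F r = ∑ s, if S s ∧ s ≤ r then G s else 0) :
    G t = ∑ r, if S r ∧ r ≤ t then μ r t • F r else 0 := by
  calc G t = ∑ s, if S s ∧ s ≤ t then ((if s = t then 1 else 0 : ℤ) • G s) else 0 :=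
        (sum_below_delta ht G).symm
    _ = ∑ s, if S s ∧ s ≤ t then ∑ r, (if S r ∧ s ≤ r ∧ r ≤ t then μ r t • G s else 0)
          else 0 := by
        refine Finset.sum_congr rfl fun s _ => ?_
        by_cases hs : S s ∧ s ≤ t
        · rw [if_pos hs, if_pos hs, sum_ite_smul_eq, hμ s t hs.1 ht hs.2]
        · rw [if_neg hs, if_neg hs]
    _ = ∑ r, if S r ∧ r ≤ t then μ r t • F r else 0 := by
        rw [← sum_below_sum_below_comm]
        refine Finset.sum_congr rfl fun r _ => ?_
        split_ifs with hr
        · rw [h r hr.1 hr.2, Finset.smul_sum]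
          simp only [smul_ite, smul_zero]
        · rfl

theorem sum_below_eq_of_eq_sum_mu_smul (μ : α → α → ℤ)
    (hμ : ∀ r t, S r → S t → r ≤ t →
      (∑ s, if S s ∧ r ≤ s ∧ s ≤ t then μ r s else 0) = if r = t then 1 else 0)
    (F G : α → M) {t : α} (ht : S t)
    (h : ∀ r, S r → r ≤ t → G r = ∑ s, if S s ∧ s ≤ r then μ s r • F s else 0) :
    (∑ r, if S r ∧ r ≤ t then G r else 0) = F t := by
  calc (∑ r, if S r ∧ r ≤ t then G r else 0)
      = ∑ s, if S s ∧ s ≤ t then ∑ r, (if S r ∧ s ≤ r ∧ r ≤ t then μ s r • F s else 0)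
          else 0 := by
        rw [← sum_below_sum_below_comm]
        refine Finset.sum_congr rfl fun r _ => ?_
        split_ifs with hr
        · exact h r hr.1 hr.2
        · rfl
    _ = ∑ s, if S s ∧ s ≤ t then ((if s = t then 1 else 0 : ℤ) • F s) else 0 := by
        refine Finset.sum_congr rfl fun s _ => ?_
        by_cases hs : S s ∧ s ≤ t
        · rw [if_pos hs, if_pos hs, sum_ite_smul_eq, hμ s t hs.1 ht hs.2]
        · rw [if_neg hs, if_neg hs]
    _ = F t := sum_below_delta ht F

/-- `hμ` says `ζ * μ = 1` for the zeta matrix `ζ` of `S`; being square, also `μ * ζ = 1`. -/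
theorem sum_mu_right_of_sum_mu_left (μ : α → α → ℤ)
    (hμ : ∀ r t, S r → S t → r ≤ t →
      (∑ s, if S s ∧ r ≤ s ∧ s ≤ t then μ s t else 0) = if r = t then 1 else 0)
    {r t : α} (hr : S r) (ht : S t) :
    (∑ s, if S s ∧ r ≤ s ∧ s ≤ t then μ r s else 0) = if r = t then 1 else 0 := by
  have sum_subtype (a b : {a // S a}) (g : α → ℤ) :
      (∑ s, if S s ∧ a.1 ≤ s ∧ s ≤ b.1 then g s else 0) =
        ∑ s : {a // S a}, if a.1 ≤ s.1 ∧ s.1 ≤ b.1 then g s else 0 := by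
    rw [← Finset.sum_subtype (univ.filter S) (by simp)
      (fun s => if a.1 ≤ s ∧ s ≤ b.1 then g s else 0), Finset.sum_filter]
    exact Finset.sum_congr rfl fun s _ => by by_cases hs : S s <;> simp [hs]
  let ζ : Matrix {a // S a} {a // S a} ℤ := Matrix.of fun a b => if a.1 ≤ b.1 then 1 else 0
  let m : Matrix {a // S a} {a // S a} ℤ := Matrix.of fun a b => if a.1 ≤ b.1 then μ a b else 0
  have hζm : ζ * m = 1 := by
    ext a b
    have hterm (s : {a // S a}) : ζ a s * m s b =
        if a.1 ≤ s.1 ∧ s.1 ≤ b.1 then μ s b else 0 := by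
      by_cases h1 : a.1 ≤ s.1 <;> by_cases h2 : s.1 ≤ b.1 <;>
        simp only [ζ, m, Matrix.of_apply, h1, h2, if_true, if_false, and_true, and_false,
          one_mul, zero_mul, mul_zero]
    rw [Matrix.mul_apply, Matrix.one_apply, Finset.sum_congr rfl fun s _ => hterm s,
      ← sum_subtype a b (μ · b)]
    by_cases hab : a.1 ≤ b.1
    · rw [hμ a b a.2 b.2 hab]
      exact if_congr Subtype.ext_iff.symm rfl rfl
    · rw [if_neg (fun h => hab (congrArg Subtype.val h).le), Finset.sum_eq_zero]
      exact fun s _ => if_neg fun h => hab (h.2.1.trans h.2.2)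
  have hmζ : m * ζ = 1 := mul_eq_one_comm.mp hζm
  have hrt' := congrArg (fun A => A ⟨r, hr⟩ ⟨t, ht⟩) hmζ
  simp only [Matrix.mul_apply, Matrix.one_apply, Subtype.mk.injEq] at hrt'
  rw [← hrt', sum_subtype ⟨r, hr⟩ ⟨t, ht⟩]
  refine Finset.sum_congr rfl fun s _ => ?_
  by_cases h1 : r ≤ s.1 <;> by_cases h2 : s.1 ≤ t <;>
    simp only [ζ, m, Matrix.of_apply, h1, h2, if_true, if_false, and_true, and_false, mul_one,
      mul_zero]

end MoebiusInversion

section NoncrossingPartitions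
variable {n : ℕ} {r : Fin n → Fin n → Bool}

lemma isNCPart_relTop : IsNCPart n (relTop n) :=
  ⟨fun _ => rfl, fun _ _ _ => rfl, fun _ _ _ _ _ => rfl, fun _ _ _ _ _ _ _ _ _ => rfl⟩

lemma relLe_relTop (r : Fin n → Fin n → Bool) : relLe r (relTop n) := fun _ _ _ => rfl

lemma eq_relTop_of_relTop_relLe (h : relLe (relTop n) r) : r = relTop n :=
  funext₂ fun i j => h i j rfl

lemma IsNCPart.comap (hr : IsNCPart n r) {m : ℕ} {f : Fin m → Fin n} (hf : StrictMono f) :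
    IsNCPart m fun i j => r (f i) (f j) := by
  obtain ⟨hrefl, hsymm, htrans, hcross⟩ := hr
  exact ⟨fun i => hrefl _, fun i j => hsymm _ _, fun i j k => htrans _ _ _,
    fun i k j l hik hkj hjl => hcross _ _ _ _ (hf hik) (hf hkj) (hf hjl)⟩

lemma IsNCPart.lt_and_lt_of_rel (hr : IsNCPart n r) {a b j m : Fin n} (hab : r a b)
    (haj : a < j) (hjb : j < b) (hnaj : ¬r a j) (hjm : r j m) : a < m ∧ m < b := by
  obtain ⟨-, hsymm, htrans, hcross⟩ := hr
  constructor
  · by_contra! hma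
    rcases hma.lt_or_eq with hma | rfl
    · exact hnaj (htrans _ _ _ (hsymm _ _ (hcross _ _ _ _ hma haj hjb (hsymm _ _ hjm) hab))
        (hsymm _ _ hjm))
    · exact hnaj (hsymm _ _ hjm)
  · by_contra! hbm
    rcases hbm.lt_or_eq with hbm | rfl
    · exact hnaj (hcross _ _ _ _ haj hjb hbm hab hjm)
    · exact hnaj (htrans _ _ _ hab (hsymm _ _ hjm))

lemma eq_relTop_of_forall_rel_zero (hr : IsNCPart n r) (hn : 0 < n)
    (h : ∀ i, r ⟨0, hn⟩ i) : r = relTop n :=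
  funext₂ fun i j => hr.2.2.1 _ _ _ (hr.2.1 _ _ (h i)) (h j)

/-- The block of minimal diameter among the blocks avoiding `0` is an interval. -/
lemma IsNCPart.exists_isIntervalBlock (hr : IsNCPart n r) (hne : r ≠ relTop n) :
    ∃ k l, 1 ≤ k ∧ IsIntervalBlock r k l := by
  have hn : 0 < n := Nat.pos_of_ne_zero fun h => hne (by subst h; exact funext (·.elim0))
  obtain ⟨hrefl, hsymm, htrans, -⟩ := id hr
  let o : Fin n := ⟨0, hn⟩
  obtain ⟨i, hoi⟩ : ∃ i, ¬r o i := by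
    by_contra! h
    exact hne (eq_relTop_of_forall_rel_zero hr hn h)
  have hblock (i : Fin n) : (univ.filter (r i ·)).Nonempty := ⟨i, by simp [hrefl i]⟩
  let lo (i : Fin n) := (univ.filter (r i ·)).min' (hblock i)
  let hi (i : Fin n) := (univ.filter (r i ·)).max' (hblock i)
  have rel_lo (i : Fin n) : r i (lo i) := by simpa using min'_mem _ (hblock i)
  have rel_hi (i : Fin n) : r i (hi i) := by simpa using max'_mem _ (hblock i)
  have lo_le {i j : Fin n} (h : r i j) : lo i ≤ j := min'_le _ _ (by simpa using h)
  have le_hi {i j : Fin n} (h : r i j) : j ≤ hi i := le_max' _ _ (by simpa using h)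
  obtain ⟨i₀, hi₀, hmin⟩ := exists_min_image (univ.filter (¬r o ·))
    (fun i => (hi i : ℕ) - lo i) ⟨i, by simpa using hoi⟩
  simp only [mem_filter, mem_univ, true_and] at hi₀ hmin
  have hfull (j : Fin n) (hlj : lo i₀ ≤ j) (hjh : j ≤ hi i₀) : r i₀ j := by
    by_contra hj
    have hlj' : lo i₀ < j := hlj.lt_of_ne (by rintro rfl; exact hj (rel_lo i₀))
    have hjh' : j < hi i₀ := hjh.lt_of_ne (by rintro rfl; exact hj (rel_hi i₀))
    have nest (m : Fin n) : r j m → lo i₀ < m ∧ m < hi i₀ :=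
      hr.lt_and_lt_of_rel (htrans _ _ _ (hsymm _ _ (rel_lo i₀)) (rel_hi i₀)) hlj' hjh'
        (fun h => hj (htrans _ _ _ (rel_lo i₀) h))
    have hoj : ¬r o j := fun h => Nat.not_lt_zero _ (Fin.lt_def.mp (nest o (hsymm _ _ h)).1)
    have := hmin j hoj
    have h1 := (nest _ (rel_lo j)).1
    have h2 := (nest _ (rel_hi j)).2
    have h3 := lo_le (rel_hi j)
    simp only [Fin.lt_def, Fin.le_def] at h1 h2 h3
    omega
  have hlo : 1 ≤ (lo i₀ : ℕ) := by
    by_contra! h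
    have hlo : lo i₀ = o := Fin.ext (by simp only [o]; omega)
    exact hi₀ (hsymm _ _ (hlo ▸ rel_lo i₀))
  have hlohi : (lo i₀ : ℕ) ≤ hi i₀ := lo_le (rel_hi i₀)
  refine ⟨lo i₀, hi i₀ + 1, hlo, by omega, by omega, fun a j ha1 ha2 => ?_⟩
  have hra : r i₀ a := hfull a ha1 (by rw [Fin.le_def]; omega)
  constructor
  · intro haj
    have hj := htrans _ _ _ hra haj
    exact ⟨lo_le hj, Nat.lt_succ_of_le (le_hi hj)⟩
  · rintro ⟨hj1, hj2⟩
    exact htrans _ _ _ (hsymm _ _ hra) (hfull j hj1 (by rw [Fin.le_def]; omega))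

end NoncrossingPartitions

section Restriction
variable {n : ℕ}

lemma skipEmb_val (k l : ℕ) (j : Fin (n - (l - k))) :
    (skipEmb k l j : ℕ) = if j.val < k then j.val else j.val + (l - k) := by
  unfold skipEmb
  split <;> rfl

lemma strictMono_skipEmb (k l : ℕ) : StrictMono (skipEmb (n := n) k l) := by
  intro i j hij
  rw [Fin.lt_def, skipEmb_val, skipEmb_val]
  rw [Fin.lt_def] at hij
  split_ifs <;> omega

lemma isNCPart_relRestr {r : Fin n → Fin n → Bool} (hr : IsNCPart n r) (k l : ℕ) :
    IsNCPart (n - (l - k)) (relRestr r k l) :=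
  hr.comap (strictMono_skipEmb k l)

theorem IsNCPart.induction {P : ∀ n : ℕ, (Fin n → Fin n → Bool) → Prop}
    (top : ∀ n, P n (relTop n))
    (step : ∀ n r, IsNCPart n r → r ≠ relTop n → ∀ k l, 1 ≤ k → IsIntervalBlock r k l →
      P (n - (l - k)) (relRestr r k l) → P n r) :
    ∀ {n r}, IsNCPart n r → P n r := by
  intro n
  induction n using Nat.strong_induction_on with
  | _ n ih =>
  intro r hr
  by_cases htop : r = relTop n
  · exact htop ▸ top n
  obtain ⟨k, l, hk, hkl⟩ := hr.exists_isIntervalBlock htop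
  exact step n r hr htop k l hk hkl
    (ih _ (by have := hkl.1; have := hkl.2.1; omega) (isNCPart_relRestr hr k l))

end Restriction

section Interval
variable {n k l : ℕ} {r : Fin n → Fin n → Bool}

def intervalEmb (k : ℕ) (hl : l ≤ n) (j : Fin (l - k)) : Fin n :=
  ⟨k + j, by have := j.isLt; omega⟩

lemma strictMono_intervalEmb (k : ℕ) (hl : l ≤ n) : StrictMono (intervalEmb k hl) :=
  fun _ _ hij => Nat.add_lt_add_left hij k

lemma intervalEmb_sub (hl : l ≤ n) (i : Fin n) (hi : k ≤ i.val ∧ i.val < l) :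
    intervalEmb k hl ⟨i - k, by omega⟩ = i :=
  Fin.ext (by simp only [intervalEmb]; omega)

def relInterval (r : Fin n → Fin n → Bool) (k : ℕ) (hl : l ≤ n) :
    Fin (l - k) → Fin (l - k) → Bool :=
  fun a b => r (intervalEmb k hl a) (intervalEmb k hl b)

lemma isNCPart_relInterval (hr : IsNCPart n r) (k : ℕ) (hl : l ≤ n) :
    IsNCPart (l - k) (relInterval r k hl) :=
  hr.comap (strictMono_intervalEmb k hl)

def IsSaturatedInterval (r : Fin n → Fin n → Bool) (k l : ℕ) : Prop :=
  ∀ i j : Fin n, k ≤ i.val → i.val < l → r i j → k ≤ j.val ∧ j.val < l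

lemma IsSaturatedInterval.isIntervalBlock (hsat : IsSaturatedInterval r k l) (hkl : k < l)
    (hl : l ≤ n) (htop : relInterval r k hl = relTop (l - k)) : IsIntervalBlock r k l := by
  refine ⟨hkl, hl, fun i j hi1 hi2 => ⟨hsat i j hi1 hi2, fun hj => ?_⟩⟩
  have := congrFun₂ htop ⟨i - k, by omega⟩ ⟨j - k, by omega⟩
  rwa [relInterval, intervalEmb_sub hl i ⟨hi1, hi2⟩, intervalEmb_sub hl j hj] at this

lemma IsSaturatedInterval.isIntervalBlock_add (hsat : IsSaturatedInterval r k l) (hl : l ≤ n)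
    {a b : ℕ} (hab : IsIntervalBlock (relInterval r k hl) a b) :
    IsIntervalBlock r (k + a) (k + b) := by
  obtain ⟨hab, hb, hblock⟩ := hab
  refine ⟨by omega, by omega, fun i j hi1 hi2 => ?_⟩
  have hi : k ≤ i.val ∧ i.val < l := ⟨by omega, by omega⟩
  have key := hblock ⟨i - k, by omega⟩
  constructor
  · intro hij
    have hj := hsat i j hi.1 hi.2 hij
    have := (key ⟨j - k, by omega⟩ (by dsimp only; omega) (by dsimp only; omega)).mp
      (by rwa [relInterval, intervalEmb_sub hl i hi, intervalEmb_sub hl j hj])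
    simp only at this
    omega
  · intro hj
    have hj' : k ≤ j.val ∧ j.val < l := ⟨by omega, by omega⟩
    have := (key ⟨j - k, by omega⟩ (by dsimp only; omega) (by dsimp only; omega)).mpr
      (by dsimp only; omega)
    rwa [relInterval, intervalEmb_sub hl i hi, intervalEmb_sub hl j hj'] at this

lemma IsSaturatedInterval.relRestr (hsat : IsSaturatedInterval r k l) {k' l' : ℕ}
    (hkk' : k ≤ k') (hl' : l' ≤ l) :
    IsSaturatedInterval (relRestr r k' l') k (l - (l' - k')) := by
  intro i j hi1 hi2 hij
  have hi := skipEmb_val k' l' i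
  have hj := skipEmb_val k' l' j
  have := hsat _ _ (by split_ifs at hi <;> omega) (by split_ifs at hi <;> omega) hij
  split_ifs at hj <;> omega

end Interval

section Join
variable {n k l : ℕ}

/-- inverse of `skipEmb k l` -/
def toCompl (hl : l ≤ n) (i : Fin n) (hi : ¬(k ≤ i.val ∧ i.val < l)) : Fin (n - (l - k)) :=
  if h : i.val < k then ⟨i, by omega⟩ else ⟨i - (l - k), by have := i.isLt; omega⟩

lemma toCompl_val (hl : l ≤ n) (i : Fin n) (hi : ¬(k ≤ i.val ∧ i.val < l)) :
    (toCompl hl i hi : ℕ) = if i.val < k then i.val else i.val - (l - k) := by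
  unfold toCompl
  split <;> rfl

lemma skipEmb_toCompl (hl : l ≤ n) (i : Fin n) (hi : ¬(k ≤ i.val ∧ i.val < l)) :
    skipEmb k l (toCompl hl i hi) = i := by
  apply Fin.ext
  rw [skipEmb_val, toCompl_val hl]
  split_ifs <;> omega

lemma skipEmb_notMem_interval (hkl : k ≤ l) (j : Fin (n - (l - k))) :
    ¬(k ≤ (skipEmb k l j).val ∧ (skipEmb k l j).val < l) := by
  rw [skipEmb_val]
  split_ifs <;> omega

lemma toCompl_skipEmb (hl : l ≤ n) (hkl : k ≤ l) (j : Fin (n - (l - k))) :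
    toCompl hl (skipEmb k l j) (skipEmb_notMem_interval hkl j) = j := by
  apply Fin.ext
  rw [toCompl_val hl, skipEmb_val]
  split_ifs <;> omega

lemma toCompl_lt_toCompl (hl : l ≤ n) {i j : Fin n} (hi : ¬(k ≤ i.val ∧ i.val < l))
    (hj : ¬(k ≤ j.val ∧ j.val < l)) (hij : i < j) : toCompl hl i hi < toCompl hl j hj := by
  rw [Fin.lt_def, toCompl_val hl, toCompl_val hl]
  rw [Fin.lt_def] at hij
  split_ifs <;> omega

/-- the paper's `π ∪ σ`, for `σ` a partition of the interval `{k, …, l-1}` and `π` one of its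
complement -/
def relJoin (hl : l ≤ n) (k : ℕ) (σ : Fin (l - k) → Fin (l - k) → Bool)
    (π : Fin (n - (l - k)) → Fin (n - (l - k)) → Bool) : Fin n → Fin n → Bool :=
  fun i j =>
    if hi : k ≤ i.val ∧ i.val < l then
      if hj : k ≤ j.val ∧ j.val < l then σ ⟨i - k, by omega⟩ ⟨j - k, by omega⟩ else false
    else if hj : k ≤ j.val ∧ j.val < l then false else π (toCompl hl i hi) (toCompl hl j hj)

variable {σ : Fin (l - k) → Fin (l - k) → Bool} {π : Fin (n - (l - k)) → Fin (n - (l - k)) → Bool}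

lemma relJoin_of_mem (hl : l ≤ n) {i j : Fin n} (hi : k ≤ i.val ∧ i.val < l)
    (hj : k ≤ j.val ∧ j.val < l) :
    relJoin hl k σ π i j = σ ⟨i - k, by omega⟩ ⟨j - k, by omega⟩ := by
  simp only [relJoin, dif_pos hi, dif_pos hj]

lemma relJoin_of_notMem (hl : l ≤ n) {i j : Fin n} (hi : ¬(k ≤ i.val ∧ i.val < l))
    (hj : ¬(k ≤ j.val ∧ j.val < l)) :
    relJoin hl k σ π i j = π (toCompl hl i hi) (toCompl hl j hj) := by
  simp only [relJoin, dif_neg hi, dif_neg hj]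

lemma mem_iff_mem_of_relJoin (hl : l ≤ n) {i j : Fin n} (h : relJoin hl k σ π i j) :
    (k ≤ i.val ∧ i.val < l) ↔ (k ≤ j.val ∧ j.val < l) := by
  unfold relJoin at h
  split_ifs at h <;> tauto

lemma isNCPart_relJoin (hl : l ≤ n) (hσ : IsNCPart (l - k) σ) (hπ : IsNCPart (n - (l - k)) π) :
    IsNCPart n (relJoin hl k σ π) := by
  obtain ⟨σrefl, σsymm, σtrans, σcross⟩ := hσ
  obtain ⟨πrefl, πsymm, πtrans, πcross⟩ := hπ
  refine ⟨fun i => ?_, fun i j h => ?_, fun i j m hij hjm => ?_,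
    fun i j j' m hij hjj' hj'm hij' hjm => ?_⟩
  · by_cases hi : k ≤ i.val ∧ i.val < l
    · rw [relJoin_of_mem hl hi hi]; exact σrefl _
    · rw [relJoin_of_notMem hl hi hi]; exact πrefl _
  · have hmem := mem_iff_mem_of_relJoin hl h
    by_cases hi : k ≤ i.val ∧ i.val < l
    · rw [relJoin_of_mem hl hi (hmem.mp hi)] at h
      rw [relJoin_of_mem hl (hmem.mp hi) hi]; exact σsymm _ _ h
    · rw [relJoin_of_notMem hl hi (mt hmem.mpr hi)] at h
      rw [relJoin_of_notMem hl (mt hmem.mpr hi) hi]; exact πsymm _ _ h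
  · have hmem := mem_iff_mem_of_relJoin hl hij
    have hmem' := mem_iff_mem_of_relJoin hl hjm
    by_cases hi : k ≤ i.val ∧ i.val < l
    · have hj := hmem.mp hi
      rw [relJoin_of_mem hl hi hj] at hij
      rw [relJoin_of_mem hl hj (hmem'.mp hj)] at hjm
      rw [relJoin_of_mem hl hi (hmem'.mp hj)]; exact σtrans _ _ _ hij hjm
    · have hj := mt hmem.mpr hi
      rw [relJoin_of_notMem hl hi hj] at hij
      rw [relJoin_of_notMem hl hj (mt hmem'.mpr hj)] at hjm
      rw [relJoin_of_notMem hl hi (mt hmem'.mpr hj)]; exact πtrans _ _ _ hij hjm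
  · have hmem := mem_iff_mem_of_relJoin hl hij'
    have hmem' := mem_iff_mem_of_relJoin hl hjm
    by_cases hi : k ≤ i.val ∧ i.val < l
    · have hj' := hmem.mp hi
      have hj : k ≤ j.val ∧ j.val < l := by rw [Fin.lt_def] at hij hjj'; omega
      rw [relJoin_of_mem hl hi hj'] at hij'
      rw [relJoin_of_mem hl hj (hmem'.mp hj)] at hjm
      rw [relJoin_of_mem hl hi hj]
      rw [Fin.lt_def] at hij hjj' hj'm
      exact σcross _ _ _ _ (Fin.mk_lt_mk.mpr (by omega)) (Fin.mk_lt_mk.mpr (by omega))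
        (Fin.mk_lt_mk.mpr (by omega)) hij' hjm
    · have hj' := mt hmem.mpr hi
      have hj : ¬(k ≤ j.val ∧ j.val < l) := fun hj => hj' (by
        have := hmem'.mp hj
        rw [Fin.lt_def] at hjj' hj'm; omega)
      rw [relJoin_of_notMem hl hi hj'] at hij'
      rw [relJoin_of_notMem hl hj (mt hmem'.mpr hj)] at hjm
      rw [relJoin_of_notMem hl hi hj]
      exact πcross _ _ _ _ (toCompl_lt_toCompl hl _ _ hij) (toCompl_lt_toCompl hl _ _ hjj')
        (toCompl_lt_toCompl hl _ _ hj'm) hij' hjm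

lemma relInterval_relJoin (hl : l ≤ n) : relInterval (relJoin hl k σ π) k hl = σ := by
  funext a b
  have ha := a.isLt
  have hb := b.isLt
  rw [relInterval, relJoin_of_mem hl (by dsimp only [intervalEmb]; omega)
    (by dsimp only [intervalEmb]; omega)]
  congr <;> simp [intervalEmb]

lemma relRestr_relJoin (hl : l ≤ n) (hkl : k ≤ l) : relRestr (relJoin hl k σ π) k l = π := by
  funext i j
  rw [relRestr, relJoin_of_notMem hl (skipEmb_notMem_interval hkl i)
    (skipEmb_notMem_interval hkl j), toCompl_skipEmb hl hkl, toCompl_skipEmb hl hkl]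

lemma isSaturatedInterval_relJoin (hl : l ≤ n) : IsSaturatedInterval (relJoin hl k σ π) k l :=
  fun _ _ hi1 hi2 h => (mem_iff_mem_of_relJoin hl h).mp ⟨hi1, hi2⟩

lemma relLe_relJoin (hl : l ≤ n) {τ : Fin n → Fin n → Bool} (hτ : IsIntervalBlock τ k l)
    (hπ : relLe π (relRestr τ k l)) : relLe (relJoin hl k σ π) τ := by
  intro i j h
  by_cases hi : k ≤ i.val ∧ i.val < l
  · exact (hτ.2.2 i j hi.1 hi.2).mpr ((mem_iff_mem_of_relJoin hl h).mp hi)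
  · have hj := fun hj => hi ((mem_iff_mem_of_relJoin hl h).mpr hj)
    rw [relJoin_of_notMem hl hi hj] at h
    simpa only [relRestr, skipEmb_toCompl] using hπ _ _ h

lemma relJoin_relInterval_relRestr (hl : l ≤ n) {r : Fin n → Fin n → Bool} (hr : IsNCPart n r)
    (hsat : IsSaturatedInterval r k l) :
    relJoin hl k (relInterval r k hl) (relRestr r k l) = r := by
  funext i j
  by_cases hi : k ≤ i.val ∧ i.val < l <;> by_cases hj : k ≤ j.val ∧ j.val < l
  · rw [relJoin_of_mem hl hi hj, relInterval, intervalEmb_sub hl i hi, intervalEmb_sub hl j hj]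
  · simp only [relJoin, dif_pos hi, dif_neg hj]
    exact (Bool.eq_false_iff.mpr fun h => hj (hsat i j hi.1 hi.2 h)).symm
  · simp only [relJoin, dif_neg hi, dif_pos hj]
    exact (Bool.eq_false_iff.mpr fun h => hi (hsat j i hj.1 hj.2 (hr.2.1 _ _ h))).symm
  · rw [relJoin_of_notMem hl hi hj, relRestr, skipEmb_toCompl, skipEmb_toCompl]

lemma sum_relLe_eq_sum_relJoin {M : Type*} [AddCommMonoid M] {τ : Fin n → Fin n → Bool}
    (hτ : IsIntervalBlock τ k l) (F : (Fin n → Fin n → Bool) → M) :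
    ∑ r ∈ univ.filter (fun r => IsNCPart n r ∧ relLe r τ), F r =
      ∑ σ ∈ univ.filter (IsNCPart (l - k)),
        ∑ π ∈ univ.filter (fun π => IsNCPart (n - (l - k)) π ∧ relLe π (relRestr τ k l)),
          F (relJoin hτ.2.1 k σ π) := by
  have hsat {r : Fin n → Fin n → Bool} (hr : relLe r τ) : IsSaturatedInterval r k l :=
    fun i j hi1 hi2 hij => (hτ.2.2 i j hi1 hi2).mp (hr i j hij)
  rw [← Finset.sum_product']
  refine Finset.sum_nbij' (fun r => (relInterval r k hτ.2.1, relRestr r k l))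
    (fun p => relJoin hτ.2.1 k p.1 p.2) ?_ ?_ ?_ ?_ ?_ <;>
    simp only [mem_filter, mem_product, mem_univ, true_and, and_imp, Prod.forall]
  · exact fun r hr hrτ => ⟨isNCPart_relInterval hr k _, isNCPart_relRestr hr k l,
      fun i j h => hrτ _ _ h⟩
  · exact fun σ π hσ hπ hπτ => ⟨isNCPart_relJoin _ hσ hπ, relLe_relJoin _ hτ hπτ⟩
  · exact fun r hr hrτ => relJoin_relInterval_relRestr _ hr (hsat hrτ)
  · exact fun σ π _ _ _ => Prod.ext (relInterval_relJoin _) (relRestr_relJoin _ hτ.1.le)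
  · exact fun r hr hrτ => by rw [relJoin_relInterval_relRestr _ hr (hsat hrτ)]

end Join

section Splice
variable {A : Type} [Ring A] {n k l : ℕ} (x : Fin n → A)

lemma splice_apply (c : A) (j : Fin (n - (l - k))) :
    splice x k l c j = if j.val + 1 = k then x (skipEmb k l j) * c else x (skipEmb k l j) := by
  simp only [splice, skipEmb]
  split_ifs <;> first | rfl | omega

lemma splice_eq_update (hk : 1 ≤ k) (hkl : k ≤ l) (hl : l ≤ n) (c : A) :
    splice x k l c = Function.update (splice x k l 0) ⟨k - 1, by omega⟩
      (x ⟨k - 1, by omega⟩ * c) := by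
  funext j
  rw [Function.update_apply, splice_apply, splice_apply]
  simp only [Fin.ext_iff]
  split_ifs with h1 h2 h2
  · congr 2
    apply Fin.ext
    rw [skipEmb_val]
    split_ifs <;> omega
  · omega
  · omega
  · rfl

lemma splice_update_skipEmb (j : Fin (n - (l - k))) (v c : A) :
    splice (Function.update x (skipEmb k l j) v) k l c =
      Function.update (splice x k l c) j (if j.val + 1 = k then v * c else v) := by
  funext q
  by_cases hq : q = j
  · subst hq
    simp only [splice_apply, Function.update_self]
  · rw [Function.update_of_ne hq, splice_apply, splice_apply,
      Function.update_of_ne ((strictMono_skipEmb k l).injective.ne hq)]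

lemma splice_update_of_mem (hkl : k ≤ l) (i : Fin n) (hi : k ≤ i.val ∧ i.val < l) (v c : A) :
    splice (Function.update x i v) k l c = splice x k l c := by
  funext q
  have hq : skipEmb k l q ≠ i := fun h => skipEmb_notMem_interval hkl q (h ▸ hi)
  rw [splice_apply, splice_apply, Function.update_of_ne hq]

end Splice

section Composition
variable {A : Type} [Ring A] {n k l : ℕ}

lemma skipEmb_skipEmb {k' l' : ℕ} (hkk' : k ≤ k') (hk'l' : k' ≤ l') (hl'l : l' ≤ l)
    (i : Fin (n - (l' - k') - (l - (l' - k') - k))) :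
    skipEmb k' l' (skipEmb k (l - (l' - k')) i) = skipEmb k l (Fin.cast (by omega) i) := by
  apply Fin.ext
  simp only [skipEmb_val, Fin.val_cast]
  split_ifs <;> omega

lemma skipEmb_intervalEmb {a b : ℕ} (hab : a ≤ b) (hb : k + b ≤ l) (hl : l ≤ n)
    (p : Fin (l - ((k + b) - (k + a)) - k)) :
    skipEmb (k + a) (k + b)
        (intervalEmb k (by omega : l - ((k + b) - (k + a)) ≤ n - ((k + b) - (k + a))) p) =
      intervalEmb k hl (skipEmb a b (Fin.cast (by omega) p)) := by
  apply Fin.ext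
  simp only [skipEmb_val, intervalEmb, Fin.val_cast]
  split_ifs <;> omega

lemma splice_splice (x : Fin n → A) {k' l' : ℕ} (hkk' : k < k') (hk'l' : k' ≤ l') (hl'l : l' ≤ l)
    (c C : A) (i : Fin (n - (l' - k') - (l - (l' - k') - k))) :
    splice (splice x k' l' c) k (l - (l' - k')) C i = splice x k l C (Fin.cast (by omega) i) := by
  have hinner : ¬((skipEmb k (l - (l' - k')) i).val + 1 = k') := by
    rw [skipEmb_val]; split_ifs <;> omega
  simp only [splice_apply, if_neg hinner, skipEmb_skipEmb hkk'.le hk'l' hl'l, Fin.val_cast]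

lemma splice_intervalEmb (x : Fin n → A) {a b : ℕ} (hab : a ≤ b) (hb : k + b ≤ l) (hl : l ≤ n)
    (c : A) (p : Fin (l - ((k + b) - (k + a)) - k)) :
    splice x (k + a) (k + b) c
        (intervalEmb k (by omega : l - ((k + b) - (k + a)) ≤ n - ((k + b) - (k + a))) p) =
      splice (x ∘ intervalEmb k hl) a b c (Fin.cast (by omega) p) := by
  rw [splice_apply, splice_apply, skipEmb_intervalEmb hab hb hl]
  simp only [intervalEmb, Fin.val_cast, Function.comp_apply, add_assoc, add_right_inj]

end Composition

section CastCongr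
variable {A : Type}

lemma congr_fin_cast (F : ∀ m : ℕ, (Fin m → A) → A) {m₁ m₂ : ℕ} (h : m₁ = m₂)
    {y₁ : Fin m₁ → A} {y₂ : Fin m₂ → A} (hy : ∀ i, y₁ i = y₂ (Fin.cast h i)) :
    F m₁ y₁ = F m₂ y₂ := by
  subst h
  exact congrArg (F m₁) (funext hy)

lemma congr_fin_cast₂ (F : ∀ m : ℕ, (Fin m → Fin m → Bool) → (Fin m → A) → A) {m₁ m₂ : ℕ}
    (h : m₁ = m₂) {r₁ : Fin m₁ → Fin m₁ → Bool} {r₂ : Fin m₂ → Fin m₂ → Bool}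
    {y₁ : Fin m₁ → A} {y₂ : Fin m₂ → A}
    (hr : ∀ i j, r₁ i j = r₂ (Fin.cast h i) (Fin.cast h j)) (hy : ∀ i, y₁ i = y₂ (Fin.cast h i)) :
    F m₁ r₁ y₁ = F m₂ r₂ y₂ := by
  subst h
  exact congrArg₂ (F m₁) (funext₂ hr) (funext hy)

end CastCongr

section SlotAdditive
variable {A : Type} [Ring A]

def IsSlotAdditive {m : ℕ} (f : (Fin m → A) → A) : Prop :=
  ∀ (x : Fin m → A) (i : Fin m) (a b : A),
    f (Function.update x i (a + b)) = f (Function.update x i a) + f (Function.update x i b)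

lemma IsSlotAdditive.map_sum {m : ℕ} {f : (Fin m → A) → A} (hf : IsSlotAdditive f)
    (x : Fin m → A) (i : Fin m) {ι : Type*} (s : Finset ι) (g : ι → A) :
    f (Function.update x i (∑ j ∈ s, g j)) = ∑ j ∈ s, f (Function.update x i (g j)) :=
  _root_.map_sum (AddMonoidHom.mk' (fun a => f (Function.update x i a)) (hf x i)) g s

lemma IsSlotAdditive.apply_splice_sum {n k l : ℕ} {f : (Fin (n - (l - k)) → A) → A}
    (hf : IsSlotAdditive f) (hk : 1 ≤ k) (hkl : k ≤ l) (hl : l ≤ n) (x : Fin n → A)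
    {ι : Type*} (s : Finset ι) (g : ι → A) :
    f (splice x k l (∑ j ∈ s, g j)) = ∑ j ∈ s, f (splice x k l (g j)) := by
  rw [splice_eq_update x hk hkl hl, Finset.mul_sum, hf.map_sum]
  exact Finset.sum_congr rfl fun j _ => by rw [splice_eq_update x hk hkl hl (g j)]

end SlotAdditive

section MultiplicativeExtension
variable {A : Type} [Ring A] {phi : ∀ n : ℕ, (Fin n → A) → A}
  {Phi : ∀ n : ℕ, (Fin n → Fin n → Bool) → (Fin n → A) → A} {n : ℕ} {r : Fin n → Fin n → Bool}

lemma IsMultExt.apply_relTop (hP : IsMultExt phi Phi) (n : ℕ) : Phi n (relTop n) = phi n :=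
  funext (hP.1 n)

lemma IsMultExt.apply_of_isIntervalBlock (hP : IsMultExt phi Phi) (hr : IsNCPart n r) {k l : ℕ}
    (hk : 1 ≤ k) (hrkl : IsIntervalBlock r k l) (x : Fin n → A) :
    Phi n r x = Phi (n - (l - k)) (relRestr r k l)
      (splice x k l (phi (l - k) (x ∘ intervalEmb k hrkl.2.1))) :=
  hP.2 n r hr k l hk hrkl x

lemma IsMultExt.apply_mem (hP : IsMultExt phi Phi) {T : Set A} (hT : ∀ m y, phi m y ∈ T)
    (hr : IsNCPart n r) (x : Fin n → A) : Phi n r x ∈ T :=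
  IsNCPart.induction (P := fun n r => ∀ x, Phi n r x ∈ T)
    (fun n x => hP.apply_relTop n ▸ hT n x)
    (fun _ _ hr _ _ _ hk hrkl ih x => hP.apply_of_isIntervalBlock hr hk hrkl x ▸ ih _) hr x

lemma IsMultExt.isSlotAdditive (hP : IsMultExt phi Phi) (hadd : ∀ m, IsSlotAdditive (phi m))
    (hr : IsNCPart n r) : IsSlotAdditive (Phi n r) := by
  refine IsNCPart.induction (P := fun n r => IsSlotAdditive (Phi n r))
    (fun n => hP.apply_relTop n ▸ hadd n) (fun n r hr _ k l hk hrkl ih x i a b => ?_) hr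
  have hl := hrkl.2.1
  simp only [hP.apply_of_isIntervalBlock hr hk hrkl]
  by_cases hi : k ≤ i.val ∧ i.val < l
  · obtain ⟨i', rfl⟩ : ∃ i', intervalEmb k hl i' = i := ⟨_, intervalEmb_sub hl i hi⟩
    simp only [Function.update_comp_eq_of_injective _ (strictMono_intervalEmb k hl).injective,
      splice_update_of_mem _ hrkl.1.le _ hi, hadd (l - k) _ i' a b]
    rw [splice_eq_update x hk hrkl.1.le hl (_ + _), mul_add, ih,
      ← splice_eq_update x hk hrkl.1.le hl, ← splice_eq_update x hk hrkl.1.le hl]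
  · obtain ⟨j, rfl⟩ : ∃ j, skipEmb k l j = i := ⟨_, skipEmb_toCompl hl i hi⟩
    have hne (p : Fin (l - k)) : intervalEmb k hl p ≠ skipEmb k l j := fun h =>
      skipEmb_notMem_interval hrkl.1.le j (h ▸ by simp only [intervalEmb]; omega)
    simp only [Function.update_comp_eq_of_forall_ne _ _ hne, splice_update_skipEmb]
    split_ifs
    · rw [add_mul]; exact ih _ _ _ _
    · exact ih _ _ _ _

/-- Peel off interval blocks inside `{k, …, l-1}` until a single block is left. -/
theorem IsMultExt.apply_eq_of_isSaturatedInterval (hP : IsMultExt phi Phi) :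
    ∀ {n r}, IsNCPart n r → ∀ {k l : ℕ}, 1 ≤ k → k < l → ∀ (hl : l ≤ n),
      IsSaturatedInterval r k l → ∀ x : Fin n → A,
      Phi n r x = Phi (n - (l - k)) (relRestr r k l)
        (splice x k l (Phi (l - k) (relInterval r k hl) (x ∘ intervalEmb k hl))) := by
  intro n
  induction n using Nat.strong_induction_on with
  | _ n ih =>
  intro r hr k l hk hkl hl hsat x
  have hσ := isNCPart_relInterval hr k hl
  by_cases htop : relInterval r k hl = relTop (l - k)
  · rw [htop, hP.apply_relTop]
    exact hP.apply_of_isIntervalBlock hr hk (hsat.isIntervalBlock hkl hl htop) x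
  obtain ⟨a, b, ha, hab⟩ := hσ.exists_isIntervalBlock htop
  have hab' := hsat.isIntervalBlock_add hl hab
  have hb := hab.1
  have hbl := hab.2.1
  have hc : phi ((k + b) - (k + a)) (x ∘ intervalEmb (k + a) hab'.2.1) =
      phi (b - a) ((x ∘ intervalEmb k hl) ∘ intervalEmb a hab.2.1) :=
    congr_fin_cast phi (by omega) fun j => congrArg x (Fin.ext (by
      simp only [intervalEmb, Fin.val_cast]; omega))
  rw [hP.apply_of_isIntervalBlock hr (by omega) hab' x,
    ih _ (by omega) (isNCPart_relRestr hr _ _) hk (by omega) (by omega)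
      (hsat.relRestr (by omega) (by omega)),
    hP.apply_of_isIntervalBlock hσ ha hab, hc]
  -- removing `{k+a, …, k+b-1}` and then the rest of `{k, …, l-1}` is removing `{k, …, l-1}`
  refine congr_fin_cast₂ Phi (by omega) (fun i j => ?_) (fun i => ?_)
  · simp only [relRestr, skipEmb_skipEmb (k := k) (l := l) (k' := k + a) (l' := k + b)
      (by omega) (by omega) (by omega)]
  · rw [splice_splice x (by omega) (by omega) (by omega)]
    congr 1
    refine congr_fin_cast₂ Phi (by omega) (fun p q => ?_) (fun p => ?_)
    · simp only [relInterval, relRestr, skipEmb_intervalEmb (k := k) hab.1.le (by omega) hl]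
    · exact splice_intervalEmb (k := k) x hab.1.le (by omega) hl _ p

theorem IsMultExt.apply_relJoin (hP : IsMultExt phi Phi) {k l : ℕ} (hk : 1 ≤ k) (hkl : k < l)
    (hl : l ≤ n) {σ : Fin (l - k) → Fin (l - k) → Bool}
    {π : Fin (n - (l - k)) → Fin (n - (l - k)) → Bool}
    (hσ : IsNCPart (l - k) σ) (hπ : IsNCPart (n - (l - k)) π) (x : Fin n → A) :
    Phi n (relJoin hl k σ π) x =
      Phi (n - (l - k)) π (splice x k l (Phi (l - k) σ (x ∘ intervalEmb k hl))) := by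
  rw [hP.apply_eq_of_isSaturatedInterval (isNCPart_relJoin hl hσ hπ) hk hkl hl
    (isSaturatedInterval_relJoin hl) x, relInterval_relJoin, relRestr_relJoin hl hkl.le]

end MultiplicativeExtension

/-! Conditions (1)–(4) of the theorem at a fixed length `n` (and partition `t`). -/

section Formulas
variable {A : Type} [Ring A] (X : Set A) (phi kappa : ∀ n : ℕ, (Fin n → A) → A)
  (Phi Kappa : ∀ n : ℕ, (Fin n → Fin n → Bool) → (Fin n → A) → A)
  (mu : ∀ n : ℕ, (Fin n → Fin n → Bool) → (Fin n → Fin n → Bool) → ℤ)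

def MomentCumulantFormula (n : ℕ) : Prop :=
  ∀ x : Fin n → A, (∀ i, x i ∈ X) →
    phi n x = ∑ r : Fin n → Fin n → Bool, if IsNCPart n r then Kappa n r x else 0

def CumulantMomentFormula (n : ℕ) : Prop :=
  ∀ x : Fin n → A, (∀ i, x i ∈ X) →
    kappa n x = ∑ r : Fin n → Fin n → Bool,
      if IsNCPart n r then mu n r (relTop n) • Phi n r x else 0

def MultMomentCumulantFormula (n : ℕ) (t : Fin n → Fin n → Bool) : Prop :=
  ∀ x : Fin n → A, (∀ i, x i ∈ X) →
    Phi n t x = ∑ r : Fin n → Fin n → Bool, if IsNCPart n r ∧ relLe r t then Kappa n r x else 0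

def MultCumulantMomentFormula (n : ℕ) (t : Fin n → Fin n → Bool) : Prop :=
  ∀ x : Fin n → A, (∀ i, x i ∈ X) →
    Kappa n t x = ∑ r : Fin n → Fin n → Bool,
      if IsNCPart n r ∧ relLe r t then mu n r t • Phi n r x else 0

variable {X phi kappa Phi Kappa mu} {n : ℕ} {t : Fin n → Fin n → Bool}

lemma momentCumulantFormula_iff (hP : IsMultExt phi Phi) :
    MomentCumulantFormula X phi Kappa n ↔ MultMomentCumulantFormula X Phi Kappa n (relTop n) := by
  simp only [MomentCumulantFormula, MultMomentCumulantFormula, hP.1, relLe_relTop, and_true]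

lemma cumulantMomentFormula_iff (hK : IsMultExt kappa Kappa) :
    CumulantMomentFormula X kappa Phi mu n ↔
      MultCumulantMomentFormula X Phi Kappa mu n (relTop n) := by
  simp only [CumulantMomentFormula, MultCumulantMomentFormula, hK.1, relLe_relTop, and_true]

lemma multCumulantMomentFormula_of_forall_relLe
    (hmu : ∀ r t, IsNCPart n r → IsNCPart n t → relLe r t →
      (∑ s, if IsNCPart n s ∧ relLe r s ∧ relLe s t then mu n s t else 0) =
        if r = t then 1 else 0)
    (ht : IsNCPart n t)
    (h : ∀ r, IsNCPart n r → relLe r t → MultMomentCumulantFormula X Phi Kappa n r) :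
    MultCumulantMomentFormula X Phi Kappa mu n t := fun x hx =>
  eq_sum_mu_smul_of_eq_sum_below (mu n) hmu (Phi n · x) (Kappa n · x) ht
    fun r hr hrt => h r hr hrt x hx

lemma multMomentCumulantFormula_of_forall_relLe
    (hmu : ∀ r t, IsNCPart n r → IsNCPart n t → relLe r t →
      (∑ s, if IsNCPart n s ∧ relLe r s ∧ relLe s t then mu n s t else 0) =
        if r = t then 1 else 0)
    (ht : IsNCPart n t)
    (h : ∀ r, IsNCPart n r → relLe r t → MultCumulantMomentFormula X Phi Kappa mu n r) :
    MultMomentCumulantFormula X Phi Kappa n t := fun x hx =>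
  (sum_below_eq_of_eq_sum_mu_smul (mu n)
    (fun _ _ hr ht _ => sum_mu_right_of_sum_mu_left (mu n) hmu hr ht) (Phi n · x) (Kappa n · x)
    ht fun r hr hrt => h r hr hrt x hx).symm

end Formulas

section MomentCumulant
variable {A : Type} [Ring A] {X : Set A} {phi kappa : ∀ n : ℕ, (Fin n → A) → A}
  {Phi Kappa : ∀ n : ℕ, (Fin n → Fin n → Bool) → (Fin n → A) → A}

theorem multMomentCumulantFormula_of_isIntervalBlock (hP : IsMultExt phi Phi)
    (hK : IsMultExt kappa Kappa) (hadd : ∀ m, IsSlotAdditive (phi m))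
    (hXK : ∀ m σ, IsNCPart m σ → ∀ y, ∀ a ∈ X, a * Kappa m σ y ∈ X)
    {n k l : ℕ} {t : Fin n → Fin n → Bool} (ht : IsNCPart n t) (hk : 1 ≤ k)
    (htkl : IsIntervalBlock t k l) (h1 : MomentCumulantFormula X phi Kappa (l - k))
    (h3 : MultMomentCumulantFormula X Phi Kappa (n - (l - k)) (relRestr t k l)) :
    MultMomentCumulantFormula X Phi Kappa n t := by
  intro x hx
  have hkl := htkl.1
  have hl := htkl.2.1
  have hsplice (σ) (hσ : IsNCPart (l - k) σ) (i) :
      splice x k l (Kappa (l - k) σ (x ∘ intervalEmb k hl)) i ∈ X := by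
    rw [splice_apply]
    split_ifs
    exacts [hXK _ _ hσ _ _ (hx _), hx _]
  calc Phi n t x
      = Phi (n - (l - k)) (relRestr t k l)
          (splice x k l (phi (l - k) (x ∘ intervalEmb k hl))) :=
        hP.apply_of_isIntervalBlock ht hk htkl x
    _ = ∑ σ ∈ univ.filter (IsNCPart (l - k)),
          Phi (n - (l - k)) (relRestr t k l)
            (splice x k l (Kappa (l - k) σ (x ∘ intervalEmb k hl))) := by
        rw [h1 (x ∘ intervalEmb k hl) fun i => hx _, ← Finset.sum_filter,
          (hP.isSlotAdditive hadd (isNCPart_relRestr ht k l)).apply_splice_sum hk hkl.le hl]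
    _ = ∑ σ ∈ univ.filter (IsNCPart (l - k)),
          ∑ π ∈ univ.filter (fun π => IsNCPart (n - (l - k)) π ∧ relLe π (relRestr t k l)),
            Kappa (n - (l - k)) π (splice x k l (Kappa (l - k) σ (x ∘ intervalEmb k hl))) :=
        Finset.sum_congr rfl fun σ hσ => by
          rw [h3 _ (hsplice σ (mem_filter.mp hσ).2), ← Finset.sum_filter]
    _ = ∑ σ ∈ univ.filter (IsNCPart (l - k)),
          ∑ π ∈ univ.filter (fun π => IsNCPart (n - (l - k)) π ∧ relLe π (relRestr t k l)),
            Kappa n (relJoin hl k σ π) x :=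
        Finset.sum_congr rfl fun σ hσ => Finset.sum_congr rfl fun π hπ =>
          (hK.apply_relJoin hk hkl hl (mem_filter.mp hσ).2 (mem_filter.mp hπ).2.1 x).symm
    _ = ∑ r, if IsNCPart n r ∧ relLe r t then Kappa n r x else 0 := by
        rw [← Finset.sum_filter, sum_relLe_eq_sum_relJoin htkl]

theorem multMomentCumulantFormula_of_lt (hP : IsMultExt phi Phi) (hK : IsMultExt kappa Kappa)
    (hadd : ∀ m, IsSlotAdditive (phi m))
    (hXK : ∀ m σ, IsNCPart m σ → ∀ y, ∀ a ∈ X, a * Kappa m σ y ∈ X) {N : ℕ}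
    (h1 : ∀ m, 1 ≤ m → m < N → MomentCumulantFormula X phi Kappa m)
    {n : ℕ} {t : Fin n → Fin n → Bool} (ht : IsNCPart n t) (hn : 1 ≤ n) (hnN : n ≤ N)
    (htN : t ≠ relTop n ∨ n < N) : MultMomentCumulantFormula X Phi Kappa n t := by
  refine IsNCPart.induction
    (P := fun n t => 1 ≤ n → n ≤ N → (t ≠ relTop n ∨ n < N) →
      MultMomentCumulantFormula X Phi Kappa n t) ?_ ?_ ht hn hnN htN
  · intro n hn _ htN
    exact (momentCumulantFormula_iff hP).mp (h1 n hn (htN.resolve_left (not_not.mpr rfl)))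
  · intro n t ht _ k l hk htkl ih hn hnN _
    have := htkl.1
    have := htkl.2.1
    exact multMomentCumulantFormula_of_isIntervalBlock hP hK hadd hXK ht hk htkl
      (h1 _ (by omega) (by omega)) (ih (by omega) (by omega) (Or.inr (by omega)))

theorem momentCumulantFormula_of_cumulantMomentFormula (hP : IsMultExt phi Phi)
    (hK : IsMultExt kappa Kappa) (hadd : ∀ m, IsSlotAdditive (phi m))
    (hXK : ∀ m σ, IsNCPart m σ → ∀ y, ∀ a ∈ X, a * Kappa m σ y ∈ X)
    {mu : ∀ n : ℕ, (Fin n → Fin n → Bool) → (Fin n → Fin n → Bool) → ℤ}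
    (hmu : ∀ (n : ℕ) (r t : Fin n → Fin n → Bool),
      IsNCPart n r → IsNCPart n t → relLe r t →
      (∑ s, if IsNCPart n s ∧ relLe r s ∧ relLe s t then mu n s t else 0) =
        if r = t then 1 else 0)
    (h2 : ∀ n, 1 ≤ n → CumulantMomentFormula X kappa Phi mu n) :
    ∀ n, 1 ≤ n → MomentCumulantFormula X phi Kappa n := by
  intro n
  induction n using Nat.strong_induction_on with
  | _ n ih =>
  intro hn
  have h4 (r : Fin n → Fin n → Bool) (hr : IsNCPart n r) :
      MultCumulantMomentFormula X Phi Kappa mu n r := by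
    by_cases htop : r = relTop n
    · exact htop ▸ (cumulantMomentFormula_iff hK).mp (h2 n hn)
    · refine multCumulantMomentFormula_of_forall_relLe (hmu n) hr fun s hs hsr => ?_
      exact multMomentCumulantFormula_of_lt hP hK hadd hXK (fun m hm hmn => ih m hmn hm) hs hn
        le_rfl (Or.inl fun h => htop (eq_relTop_of_relTop_relLe (h ▸ hsr)))
  exact (momentCumulantFormula_iff hP).mpr
    (multMomentCumulantFormula_of_forall_relLe (hmu n) isNCPart_relTop fun r hr _ => h4 r hr)

end MomentCumulant

theorem moebius_inversion_for_multiplicative_extensions_general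
    {A : Type} [Ring A] [Algebra ℂ A] (B : Subalgebra ℂ A)
    (X : Submodule ℂ A)
    (hXr : ∀ b ∈ B, ∀ x ∈ X, x * b ∈ X)
    (phi kappa : ∀ n : ℕ, (Fin n → A) → A)
    (hkappaB : ∀ (n : ℕ) (x : Fin n → A), kappa n x ∈ B)
    (hphi : ∀ n : ℕ, IsBimodMap B (phi n))
    (Phi Kappa : ∀ n : ℕ, (Fin n → Fin n → Bool) → (Fin n → A) → A)
    (hPhi : IsMultExt phi Phi) (hKappa : IsMultExt kappa Kappa)
    (mu : ∀ n : ℕ, (Fin n → Fin n → Bool) → (Fin n → Fin n → Bool) → ℤ)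
    (hmu : ∀ (n : ℕ) (r t : Fin n → Fin n → Bool),
      IsNCPart n r → IsNCPart n t → relLe r t →
      (∑ s : Fin n → Fin n → Bool,
        if IsNCPart n s ∧ relLe r s ∧ relLe s t then mu n s t else 0) =
        (if r = t then 1 else 0)) :
    -- (1) ↔ (2), (1) ↔ (3), (1) ↔ (4)
    ((∀ (n : ℕ), 1 ≤ n → ∀ x : Fin n → A, (∀ i, x i ∈ X) →
        phi n x = ∑ r : Fin n → Fin n → Bool,
          if IsNCPart n r then Kappa n r x else 0) ↔
      (∀ (n : ℕ), 1 ≤ n → ∀ x : Fin n → A, (∀ i, x i ∈ X) →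
        kappa n x = ∑ r : Fin n → Fin n → Bool,
          if IsNCPart n r then mu n r (relTop n) • Phi n r x else 0)) ∧
    ((∀ (n : ℕ), 1 ≤ n → ∀ x : Fin n → A, (∀ i, x i ∈ X) →
        phi n x = ∑ r : Fin n → Fin n → Bool,
          if IsNCPart n r then Kappa n r x else 0) ↔
      (∀ (n : ℕ), 1 ≤ n → ∀ t : Fin n → Fin n → Bool, IsNCPart n t →
        ∀ x : Fin n → A, (∀ i, x i ∈ X) →
        Phi n t x = ∑ r : Fin n → Fin n → Bool,
          if IsNCPart n r ∧ relLe r t then Kappa n r x else 0)) ∧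
    ((∀ (n : ℕ), 1 ≤ n → ∀ x : Fin n → A, (∀ i, x i ∈ X) →
        phi n x = ∑ r : Fin n → Fin n → Bool,
          if IsNCPart n r then Kappa n r x else 0) ↔
      (∀ (n : ℕ), 1 ≤ n → ∀ t : Fin n → Fin n → Bool, IsNCPart n t →
        ∀ x : Fin n → A, (∀ i, x i ∈ X) →
        Kappa n t x = ∑ r : Fin n → Fin n → Bool,
          if IsNCPart n r ∧ relLe r t then mu n r t • Phi n r x else 0)) := by
  have hadd (m : ℕ) : IsSlotAdditive (phi m) := (hphi m).1
  have hXK (m : ℕ) (σ : Fin m → Fin m → Bool) (hσ : IsNCPart m σ) (y : Fin m → A) :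
      ∀ a ∈ (X : Set A), a * Kappa m σ y ∈ (X : Set A) :=
    fun a ha => hXr _ (hKappa.apply_mem (T := B) hkappaB hσ y) a ha
  have h13 : (∀ n, 1 ≤ n → MomentCumulantFormula X phi Kappa n) →
      ∀ n, 1 ≤ n → ∀ t, IsNCPart n t → MultMomentCumulantFormula X Phi Kappa n t :=
    fun h1 n hn _ ht => multMomentCumulantFormula_of_lt hPhi hKappa hadd hXK
      (fun m hm _ => h1 m hm) ht hn n.le_succ (Or.inr n.lt_succ_self)
  have h34 : (∀ n, 1 ≤ n → ∀ t, IsNCPart n t → MultMomentCumulantFormula X Phi Kappa n t) →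
      ∀ n, 1 ≤ n → ∀ t, IsNCPart n t → MultCumulantMomentFormula X Phi Kappa mu n t :=
    fun h3 n hn _ ht => multCumulantMomentFormula_of_forall_relLe (hmu n) ht
      fun r hr _ => h3 n hn r hr
  have h43 : (∀ n, 1 ≤ n → ∀ t, IsNCPart n t → MultCumulantMomentFormula X Phi Kappa mu n t) →
      ∀ n, 1 ≤ n → ∀ t, IsNCPart n t → MultMomentCumulantFormula X Phi Kappa n t :=
    fun h4 n hn _ ht => multMomentCumulantFormula_of_forall_relLe (hmu n) ht
      fun r hr _ => h4 n hn r hr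
  have h31 : (∀ n, 1 ≤ n → ∀ t, IsNCPart n t → MultMomentCumulantFormula X Phi Kappa n t) →
      ∀ n, 1 ≤ n → MomentCumulantFormula X phi Kappa n :=
    fun h3 n hn => (momentCumulantFormula_iff hPhi).mpr (h3 n hn _ isNCPart_relTop)
  have h42 : (∀ n, 1 ≤ n → ∀ t, IsNCPart n t → MultCumulantMomentFormula X Phi Kappa mu n t) →
      ∀ n, 1 ≤ n → CumulantMomentFormula X kappa Phi mu n :=
    fun h4 n hn => (cumulantMomentFormula_iff hKappa).mpr (h4 n hn _ isNCPart_relTop)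
  exact ⟨⟨fun h1 => h42 (h34 (h13 h1)),
      momentCumulantFormula_of_cumulantMomentFormula hPhi hKappa hadd hXK hmu⟩,
    ⟨h13, h31⟩, ⟨fun h1 => h34 (h13 h1), fun h4 => h31 (h43 h4)⟩⟩

/-- (Möbius inversion for operator-valued cumulants.)  Let `B ⊆ A` be a
unital inclusion of unital complex algebras, `X` a `B`-`B`-subbimodule of `A`, and
`{φₙ}`, `{κₙ}` two families of `B`-valued `B`-`B`-bimodule maps on tuples from `X`, with
multiplicative extensions `{Φ_π}`, `{K_π}` over the lattice `NC(n)` of noncrossing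
partitions, and let `μ` be the Möbius function of that lattice.  Then the conditions
(1) `φₙ = ∑_{π} K_π`, (2) `κₙ = ∑_π μ(π,1ₙ) Φ_π`, (3) `Φ_τ = ∑_{π ≤ τ} K_π`,
(4) `K_τ = ∑_{π ≤ τ} μ(π,τ) Φ_π` are all equivalent. -/
theorem moebius_inversion_for_multiplicative_extensions
    {A : Type} [Ring A] [Algebra ℂ A] (B : Subalgebra ℂ A)
    (X : Submodule ℂ A)
    (hXl : ∀ b ∈ B, ∀ x ∈ X, b * x ∈ X) (hXr : ∀ b ∈ B, ∀ x ∈ X, x * b ∈ X)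
    (phi kappa : ∀ n : ℕ, (Fin n → A) → A)
    (hphiB : ∀ (n : ℕ) (x : Fin n → A), phi n x ∈ B)
    (hkappaB : ∀ (n : ℕ) (x : Fin n → A), kappa n x ∈ B)
    (hphi : ∀ n : ℕ, IsBimodMap B (phi n)) (hkappa : ∀ n : ℕ, IsBimodMap B (kappa n))
    (Phi Kappa : ∀ n : ℕ, (Fin n → Fin n → Bool) → (Fin n → A) → A)
    (hPhi : IsMultExt phi Phi) (hKappa : IsMultExt kappa Kappa)
    (mu : ∀ n : ℕ, (Fin n → Fin n → Bool) → (Fin n → Fin n → Bool) → ℤ)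
    (hmu : ∀ (n : ℕ) (r t : Fin n → Fin n → Bool),
      IsNCPart n r → IsNCPart n t → relLe r t →
      (∑ s : Fin n → Fin n → Bool,
        if IsNCPart n s ∧ relLe r s ∧ relLe s t then mu n s t else 0) =
        (if r = t then 1 else 0)) :
    -- (1) ↔ (2), (1) ↔ (3), (1) ↔ (4)
    ((∀ (n : ℕ), 1 ≤ n → ∀ x : Fin n → A, (∀ i, x i ∈ X) →
        phi n x = ∑ r : Fin n → Fin n → Bool,
          if IsNCPart n r then Kappa n r x else 0) ↔
      (∀ (n : ℕ), 1 ≤ n → ∀ x : Fin n → A, (∀ i, x i ∈ X) →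
        kappa n x = ∑ r : Fin n → Fin n → Bool,
          if IsNCPart n r then mu n r (relTop n) • Phi n r x else 0)) ∧
    ((∀ (n : ℕ), 1 ≤ n → ∀ x : Fin n → A, (∀ i, x i ∈ X) →
        phi n x = ∑ r : Fin n → Fin n → Bool,
          if IsNCPart n r then Kappa n r x else 0) ↔
      (∀ (n : ℕ), 1 ≤ n → ∀ t : Fin n → Fin n → Bool, IsNCPart n t →
        ∀ x : Fin n → A, (∀ i, x i ∈ X) →
        Phi n t x = ∑ r : Fin n → Fin n → Bool,
          if IsNCPart n r ∧ relLe r t then Kappa n r x else 0)) ∧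
    ((∀ (n : ℕ), 1 ≤ n → ∀ x : Fin n → A, (∀ i, x i ∈ X) →
        phi n x = ∑ r : Fin n → Fin n → Bool,
          if IsNCPart n r then Kappa n r x else 0) ↔
      (∀ (n : ℕ), 1 ≤ n → ∀ t : Fin n → Fin n → Bool, IsNCPart n t →
        ∀ x : Fin n → A, (∀ i, x i ∈ X) →
        Kappa n t x = ∑ r : Fin n → Fin n → Bool,
          if IsNCPart n r ∧ relLe r t then mu n r t • Phi n r x else 0)) :=
  moebius_inversion_for_multiplicative_extensions_general B X hXr phi kappa hkappaB hphi Phi Kappa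
    hPhi hKappa mu hmu
end
end
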